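/- arXiv:2109.04296 — 6 statements merged into one kernel-verified Lean document; each statement's English description precedes it below -/
import Mathlib

section
/- Let q, r ∈ ℝ and let D(Λ) = 4Λ³ - 8q²Λ² + 4q(q³ - 9r)Λ - 27r² + 4rq³. Then the discriminant of D as a polynomial in Λ, normalized as for a monic cubic (i.e. Δ_Λ of D/4), satisfies Δ = r(8q³ - 27r)³/16; in particular it has the same sign as r(8q³ - 27r). -/
lemma sign_aux (a y : ℝ) : (0 < a * y^3 / 16 ↔ 0 < a * y) ∧
    (a * y^3 / 16 < 0 ↔ a * y < 0) := by
  rcases lt_trichotomy y 0 with h | h | h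
  · have h2 : 0 < y^2 := by nlinarith
    constructor <;> constructor <;> intro hx <;> nlinarith
  · simp [h]
  · have h2 : 0 < y^2 := by nlinarith
    constructor <;> constructor <;> intro hx <;> nlinarith

/-- the Λ-discriminant of `D(Λ)/4 = Λ³ - 2q²Λ² + q(q³-9r)Λ +
(4rq³ - 27r²)/4` (monic-cubic discriminant `-4b³d + b²c² + 18bcd - 4c³ - 27d²`)
equals `r(8q³ - 27r)³/16`; in particular it has the same sign as `r(8q³-27r)`. -/
theorem stmt5 (q r : ℝ) (b c d Δ : ℝ)
    (hb : b = -2 * q^2) (hc : c = q * (q^3 - 9 * r))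
    (hd : d = (4 * r * q^3 - 27 * r^2) / 4)
    (hΔ : Δ = -4 * b^3 * d + b^2 * c^2 + 18 * b * c * d - 4 * c^3 - 27 * d^2) :
    Δ = r * (8 * q^3 - 27 * r)^3 / 16 ∧
    (0 < Δ ↔ 0 < r * (8 * q^3 - 27 * r)) ∧
    (Δ < 0 ↔ r * (8 * q^3 - 27 * r) < 0) := by
  have key : Δ = r * (8 * q^3 - 27 * r)^3 / 16 := by
    subst hb hc hd hΔ; ring
  have := sign_aux r (8 * q^3 - 27 * r)
  rw [key]
  exact ⟨rfl, this.1, this.2⟩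
end

section
/- Let 𝒫(ζ,Λ) be the polynomial in Λ defined by 𝒫(ζ,Λ) = -4Λ³ + (9ζ + 8q²)Λ² - 2(3ζ² - 3q²ζ + 2q⁴ - 18qr)Λ + ζ³ - 2q²ζ² + q⁴ζ + 27r² - 4q³r. Then its Λ-discriminant Q(ζ) factorizes as Q(ζ) = 4·Q₁(ζ)²·Q₂(ζ), where Q₁(ζ) = 18qζ + 27r - 8q³ and Q₂(ζ) = ζ³ - 8q²ζ² + 8q(2q³ - 9r)ζ + 4r(8q³ - 27r). -/
/-- the Λ-discriminant `Q(ζ)` of `𝒫(ζ,Λ) = aΛ³ + bΛ² + cΛ + d`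
(with `a = -4`, etc.) factorizes as `Q(ζ) = 4 Q₁(ζ)² Q₂(ζ)`. -/
theorem stmt8 (q r ζ : ℝ) (a b c d Q Q₁ Q₂ : ℝ)
    (ha : a = -4) (hb : b = 9 * ζ + 8 * q^2)
    (hc : c = -2 * (3 * ζ^2 - 3 * q^2 * ζ + 2 * q^4 - 18 * q * r))
    (hd : d = ζ^3 - 2 * q^2 * ζ^2 + q^4 * ζ + 27 * r^2 - 4 * q^3 * r)
    (hQ : Q = 18 * a * b * c * d - 4 * b^3 * d + b^2 * c^2 - 4 * a * c^3 - 27 * a^2 * d^2)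
    (hQ₁ : Q₁ = 18 * q * ζ + 27 * r - 8 * q^3)
    (hQ₂ : Q₂ = ζ^3 - 8 * q^2 * ζ^2 + 8 * q * (2 * q^3 - 9 * r) * ζ
      + 4 * r * (8 * q^3 - 27 * r)) :
    Q = 4 * Q₁^2 * Q₂ := by
  subst ha hb hc hd hQ hQ₁ hQ₂; ring
end

section
/- Let q, r be real with q ≠ 0 and suppose the cubic Q₂(ζ) = ζ³ - 8q²ζ² + 8q(2q³ - 9r)ζ + 4r(8q³ - 27r) has three real roots with exactly two of them negative (ζ₁ < ζ₂ < 0 < ζ₃), and its discriminant 16r(16q³ - 27r)³ is positive. Then (8/27)q⁴ < qr < (16/27)q⁴. -/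
/-- if `Q₂` has real roots `ζ₁ < ζ₂ < 0 < ζ₃` and its discriminant
`16r(16q³-27r)³` is positive, then `(8/27)q⁴ < qr < (16/27)q⁴`. -/
theorem stmt11 (q r : ℝ) (hq : q ≠ 0) (ζ₁ ζ₂ ζ₃ : ℝ)
    (hroots : ∀ ζ : ℝ,
      ζ^3 - 8 * q^2 * ζ^2 + 8 * q * (2 * q^3 - 9 * r) * ζ + 4 * r * (8 * q^3 - 27 * r)
        = (ζ - ζ₁) * (ζ - ζ₂) * (ζ - ζ₃))
    (h12 : ζ₁ < ζ₂) (h20 : ζ₂ < 0) (h03 : 0 < ζ₃)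
    (hdisc : 0 < 16 * r * (16 * q^3 - 27 * r)^3) :
    (8 / 27) * q^4 < q * r ∧ q * r < (16 / 27) * q^4 := by
  have h0 := hroots 0
  have hprod : 0 < ζ₁ * ζ₂ * ζ₃ :=
    mul_pos (mul_pos_of_neg_of_neg (h12.trans h20) h20) h03
  have key : 4 * r * (8 * q^3 - 27 * r) < 0 := by nlinarith
  rcases lt_trichotomy r 0 with hr | hr | hr
  · -- r < 0 : (16q³-27r)³ < 0, so 16q³ < 27r < 0, so q < 0; also 8q³ > 27r
    have hc : (16 * q^3 - 27 * r)^3 < 0 := by nlinarith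
    have h16 : 16 * q^3 - 27 * r < 0 := by
      nlinarith [pow_pos (show (0:ℝ) < -(16 * q^3 - 27 * r) by nlinarith [sq_nonneg (16 * q^3 - 27 * r)]) 1]
    have hq3 : q^3 < 0 := by nlinarith
    have hqneg : q < 0 := by
      by_contra h
      push_neg at h
      nlinarith [pow_nonneg h 3]
    have h8 : 27 * r < 8 * q^3 := by nlinarith
    constructor <;> nlinarith [mul_pos (neg_pos.mpr hqneg) (neg_pos.mpr hr)]
  · exfalso; rw [hr] at hdisc; simp at hdisc
  · -- r > 0 : 16q³ > 27r > 0, so q > 0; also 8q³ < 27r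
    have hc : 0 < (16 * q^3 - 27 * r)^3 := by nlinarith
    have h16 : 0 < 16 * q^3 - 27 * r := by
      by_contra h
      push_neg at h
      nlinarith [pow_nonneg (neg_nonneg.mpr h) 3, sq_nonneg (16 * q^3 - 27 * r)]
    have hq3 : 0 < q^3 := by nlinarith
    have hqpos : 0 < q := by
      by_contra h
      push_neg at h
      nlinarith [pow_nonneg (neg_nonneg.mpr h) 3]
    have h8 : 8 * q^3 < 27 * r := by nlinarith
    constructor <;> nlinarith [mul_pos hqpos hr]
end

section
/- Let q, r be real with q ≠ 0, qr ≠ 0. It is impossible that the cubic Q₂(ζ) = ζ³ - 8q²ζ² + 8q(2q³ - 9r)ζ + 4r(8q³ - 27r) has three positive real roots. -/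
/-- `Q₂` cannot have three positive real roots. -/
theorem stmt12 (q r : ℝ) (hq : q ≠ 0) (hqr : q * r ≠ 0) :
    ¬ ∃ ζ₁ ζ₂ ζ₃ : ℝ, 0 < ζ₁ ∧ 0 < ζ₂ ∧ 0 < ζ₃ ∧
      ∀ ζ : ℝ,
        ζ^3 - 8 * q^2 * ζ^2 + 8 * q * (2 * q^3 - 9 * r) * ζ + 4 * r * (8 * q^3 - 27 * r)
          = (ζ - ζ₁) * (ζ - ζ₂) * (ζ - ζ₃) := by
  rintro ⟨a, b, c, ha, hb, hc, h⟩
  have hr : r ≠ 0 := fun h0 => hqr (by rw [h0, mul_zero])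
  -- Vieta
  have hA : a + b + c = 8 * q ^ 2 := by linear_combination (h 1 + h (-1)) / 2 - h 0
  have hB : a * b + a * c + b * c = 8 * q * (2 * q ^ 3 - 9 * r) := by
    linear_combination (h (-1) - h 1) / 2
  have hC : a * b * c = -(4 * r * (8 * q ^ 3 - 27 * r)) := by linear_combination h 0
  -- discriminant identity
  have key : ((a - b) * (a - c) * (b - c)) ^ 2 =
      (a + b + c) ^ 2 * (a * b + a * c + b * c) ^ 2
        - 4 * (a * b + a * c + b * c) ^ 3
        - 4 * (a + b + c) ^ 3 * (a * b * c)
        + 18 * (a + b + c) * (a * b + a * c + b * c) * (a * b * c)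
        - 27 * (a * b * c) ^ 2 := by ring
  rw [hA, hB, hC] at key
  have key2 : ((a - b) * (a - c) * (b - c)) ^ 2 = 16 * r * (16 * q ^ 3 - 27 * r) ^ 3 := by
    linear_combination key
  have hD : 0 ≤ 16 * r * (16 * q ^ 3 - 27 * r) ^ 3 := key2 ▸ sq_nonneg _
  have hB' : 0 < 8 * q * (2 * q ^ 3 - 9 * r) := hB ▸ (by positivity)
  have hC' : 0 < -(4 * r * (8 * q ^ 3 - 27 * r)) := hC ▸ (by positivity)
  clear h key key2 hA hB hC ha hb hc
  rcases hr.lt_or_gt with hrneg | hrpos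
  · -- r < 0
    have hx : (16 * q ^ 3 - 27 * r) ^ 3 ≤ 0 := by nlinarith [hD]
    have hx2 : 16 * q ^ 3 - 27 * r ≤ 0 := by
      by_contra h'
      push_neg at h'
      nlinarith [pow_pos h' 3]
    have hq3 : q ^ 3 < 0 := by linarith
    have hqneg : q < 0 := by
      by_contra h'
      push_neg at h'
      nlinarith [pow_nonneg h' 3]
    have h1 : 2 * q ^ 3 - 9 * r < 0 := by nlinarith
    have h2 : 0 < 8 * q ^ 3 - 27 * r := by nlinarith
    linarith
  · -- r > 0
    have hx : 0 ≤ (16 * q ^ 3 - 27 * r) ^ 3 := by nlinarith [hD]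
    have hx2 : 0 ≤ 16 * q ^ 3 - 27 * r := by
      by_contra h'
      push_neg at h'
      nlinarith [pow_pos (neg_pos.2 h') 3]
    have hq3 : 0 < q ^ 3 := by linarith
    have hqpos : 0 < q := by
      by_contra h'
      push_neg at h'
      nlinarith [pow_nonneg (neg_nonneg.2 h') 3]
    have h1 : 0 < 2 * q ^ 3 - 9 * r := by nlinarith
    have h2 : 8 * q ^ 3 - 27 * r < 0 := by nlinarith
    linarith
end

section
/- Let w₁, w₂, w₃ be the roots of P(w)=(w-q)(w²-Λ)+r with real q, r, Λ, and define ω_j = w_{j+1}² - w_{j+2}² (mod 3). Then (ξ-ω₁²)(ξ-ω₂²)(ξ-ω₃²) = ξ³ + δ₂ξ² + δ₁ξ + δ₀ with δ₂ = -2(q⁴ - 6qr - 2q²Λ + Λ²), δ₁ = (q⁴ - 6qr - 2q²Λ + Λ²)², and δ₀ = r²(-4q³r + 27r² - 4q⁴Λ + 36qrΛ + 8q²Λ² - 4Λ³). -/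
/-- with `ωⱼ = w_{j+1}² - w_{j+2}²` for the roots of
`P(w)=(w-q)(w²-Λ)+r`, the monic cubic with roots `ωⱼ²` is
`ξ³ + δ₂ξ² + δ₁ξ + δ₀` with the stated coefficients. -/
theorem stmt17 (q r Λ : ℝ) (w₁ w₂ w₃ : ℂ)
    (hroots : ∀ w : ℂ, (w - q) * (w^2 - Λ) + r = (w - w₁) * (w - w₂) * (w - w₃))
    (ω₁ ω₂ ω₃ : ℂ)
    (hω₁ : ω₁ = w₂^2 - w₃^2) (hω₂ : ω₂ = w₃^2 - w₁^2) (hω₃ : ω₃ = w₁^2 - w₂^2) :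
    ∀ ξ : ℂ,
      (ξ - ω₁^2) * (ξ - ω₂^2) * (ξ - ω₃^2) =
        ξ^3 + (-2 * ((q:ℂ)^4 - 6 * q * r - 2 * q^2 * Λ + Λ^2)) * ξ^2
          + ((q:ℂ)^4 - 6 * q * r - 2 * q^2 * Λ + Λ^2)^2 * ξ
          + (r:ℂ)^2 * (-4 * q^3 * r + 27 * r^2 - 4 * (q:ℂ)^4 * Λ
              + 36 * q * r * Λ + 8 * q^2 * Λ^2 - 4 * (Λ:ℂ)^3) := by
  have h0 := hroots 0
  have h1 := hroots 1
  have h2 := hroots (-1)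
  have hq : (q:ℂ) = w₁ + w₂ + w₃ := by
    linear_combination (-(1:ℂ)/2) * h1 + (-(1:ℂ)/2) * h2 + h0
  have hΛ : (Λ:ℂ) = -(w₁*w₂ + w₁*w₃ + w₂*w₃) := by
    linear_combination ((1:ℂ)/2) * h2 + (-(1:ℂ)/2) * h1
  have hr : (r:ℂ) = (w₁ + w₂ + w₃) * (w₁*w₂ + w₁*w₃ + w₂*w₃) - w₁*w₂*w₃ := by
    linear_combination h0 + (-(Λ:ℂ)) * hq + (-(w₁ + w₂ + w₃)) * hΛ
  intro ξ
  subst hω₁ hω₂ hω₃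
  rw [hq, hΛ, hr]
  ring
end

section
/- Let w₁, w₂, w₃ be the roots of P(w) = (w-q)(w²-Λ)+r with real parameters q, r, Λ, and set k_j = w_{j+1} - w_{j+2}, ω_j = w_{j+1}² - w_{j+2}² (indices mod 3). Then H(k_j, ω_j) = 0 for each j, where H(k,ω) = ω³ - 4qkω² + k²(4q² - k²)ω - 4rk³. -/
/-- dispersion relation `H(kⱼ, ωⱼ) = 0`, with
`H(k,ω) = ω³ - 4qkω² + k²(4q²-k²)ω - 4rk³`, for the differences of roots
and squared roots of `P(w)=(w-q)(w²-Λ)+r`. -/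
theorem stmt18 (q r Λ : ℝ) (w : ZMod 3 → ℂ)
    (hroots : ∀ x : ℂ, (x - q) * (x^2 - Λ) + r = (x - w 0) * (x - w 1) * (x - w 2))
    (k ω : ZMod 3 → ℂ)
    (hk : ∀ j, k j = w (j + 1) - w (j + 2))
    (hω : ∀ j, ω j = (w (j + 1))^2 - (w (j + 2))^2) :
    ∀ j : ZMod 3,
      (ω j)^3 - 4 * q * k j * (ω j)^2
        + (k j)^2 * (4 * (q:ℂ)^2 - (k j)^2) * ω j - 4 * r * (k j)^3 = 0 := by
  have he1 : w 0 + w 1 + w 2 = (q : ℂ) := by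
    linear_combination (hroots 1 + hroots (-1) - 2 * hroots 0) / 2
  have he2 : w 0 * w 1 + w 0 * w 2 + w 1 * w 2 = -(Λ : ℂ) := by
    linear_combination (hroots (-1) - hroots 1) / 2
  have hcases : ∀ j : ZMod 3, j = 0 ∨ j = 1 ∨ j = 2 := by decide
  have hP : ∀ j : ZMod 3, (w j - q) * ((w j)^2 - Λ) + r = 0 := by
    intro j
    rcases hcases j with h | h | h <;> subst h
    · linear_combination hroots (w 0)
    · linear_combination hroots (w 1)
    · linear_combination hroots (w 2)
  intro j
  rw [hk j, hω j]
  rcases hcases j with h | h | h <;> subst h <;>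
    simp only [show ((0:ZMod 3)+1) = 1 by decide, show ((0:ZMod 3)+2) = 2 by decide,
      show ((1:ZMod 3)+1) = 2 by decide, show ((1:ZMod 3)+2) = 0 by decide,
      show ((2:ZMod 3)+1) = 0 by decide, show ((2:ZMod 3)+2) = 1 by decide]
  · linear_combination
      (-4 * (w 1 - w 2)^3 * ((q + w 0) * (w 1 + w 2 + q - w 0) + Λ - q^2)) * he1
      + (4 * (w 1 - w 2)^3 * (w 1 + w 2)) * he2
      + (-4 * (w 1 - w 2)^3) * hP 0
  · linear_combination
      (-4 * (w 2 - w 0)^3 * ((q + w 1) * (w 2 + w 0 + q - w 1) + Λ - q^2)) * he1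
      + (4 * (w 2 - w 0)^3 * (w 2 + w 0)) * he2
      + (-4 * (w 2 - w 0)^3) * hP 1
  · linear_combination
      (-4 * (w 0 - w 1)^3 * ((q + w 2) * (w 0 + w 1 + q - w 2) + Λ - q^2)) * he1
      + (4 * (w 0 - w 1)^3 * (w 0 + w 1)) * he2
      + (-4 * (w 0 - w 1)^3) * hP 2
end
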